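/- For every window size N ≥ 1, the supremal controllable sublanguage K↑ of K is nonempty if and only if the conservative closed-loop language satisfies L(G, γ^N_cons) ⊆ pr(K↑). -/
import Mathlib


open Set

/-- Prefix closure of a language. -/
def prCl {α : Type*} (L : Set (List α)) : Set (List α) := {s | ∃ t ∈ L, s <+: t}

/-- `M` is controllable w.r.t. the (prefix-closed) language `L` and uncontrollable
events `Suc`: `pr(M)·Σ_uc ∩ L ⊆ pr(M)`. -/
def ctrb {α : Type*} (M L : Set (List α)) (Suc : Set α) : Prop :=
  ∀ s ∈ prCl M, ∀ σ ∈ Suc, s ++ [σ] ∈ L → s ++ [σ] ∈ prCl M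

/-- Supremal controllable sublanguage of `K` w.r.t. `L` and `Suc`:
the union of all controllable sublanguages of `K`. -/
def supC {α : Type*} (K L : Set (List α)) (Suc : Set α) : Set (List α) :=
  ⋃₀ {M | M ⊆ K ∧ ctrb M L Suc}

/-- Post-language of `L` after `s`: `L/s = {t : st ∈ L}`. -/
def postL {α : Type*} (L : Set (List α)) (s : List α) : Set (List α) := {t | s ++ t ∈ L}

/-- Truncation of `L` to strings of length at most `N`. -/
def truncL {α : Type*} (L : Set (List α)) (N : ℕ) : Set (List α) := {t ∈ L | t.length ≤ N}

/-- Active set of `L` after `s`. -/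
def activeSet {α : Type*} (L : Set (List α)) (s : List α) : Set α := {σ | s ++ [σ] ∈ L}

/-- The closed-loop language `L(G,γ)`, defined inductively:
`ε ∈ L(G,γ)`, and `sσ ∈ L(G,γ)` iff `s ∈ L(G,γ)`, `sσ ∈ L(G)` and `σ ∈ γ(s)`. -/
inductive InLoop {α : Type*} (L : Set (List α)) (γ : List α → Set α) : List α → Prop
  | nil : InLoop L γ []
  | snoc {s : List α} {σ : α} : InLoop L γ s → (s ++ [σ]) ∈ L → σ ∈ γ s →
      InLoop L γ (s ++ [σ])

/-- The closed-loop language as a set. -/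
def loopLang {α : Type*} (L : Set (List α)) (γ : List α → Set α) : Set (List α) :=
  {s | InLoop L γ s}

/-- The `N`-step conservative LLP decision
`f^N_cons(s) = (K/s|_{N-1})^{↑/s|_N}`. -/
def fCons {α : Type*} (K L : Set (List α)) (Suc : Set α) (N : ℕ) (s : List α) :
    Set (List α) :=
  supC (truncL (postL K s) (N - 1)) (truncL (postL L s) N) Suc

/-- The `N`-step optimistic LLP decision
`f^N_optm(s) = (K/s|_N ∪ (pr(K)/s|_N \ pr(K)/s|_{N-1}))^{↑/s|_N}`. -/
def fOptm {α : Type*} (K L : Set (List α)) (Suc : Set α) (N : ℕ) (s : List α) :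
    Set (List α) :=
  supC (truncL (postL K s) N ∪
        (truncL (postL (prCl K) s) N \ truncL (postL (prCl K) s) (N - 1)))
       (truncL (postL L s) N) Suc

/-- The LLP control policy `γ(s) = pr(f(s))|_1 ∪ (Σ_uc ∩ Σ_{L(G)}(s))`,
viewed as the set of enabled events. -/
def policy {α : Type*} (f : List α → Set (List α)) (L : Set (List α)) (Suc : Set α)
    (s : List α) : Set α :=
  {σ | [σ] ∈ prCl (f s)} ∪ (Suc ∩ activeSet L s)

/-- The conservative LLP control policy `γ^N_cons`. -/
def γCons {α : Type*} (K L : Set (List α)) (Suc : Set α) (N : ℕ) : List α → Set α :=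
  policy (fCons K L Suc N) L Suc

/-- The optimistic LLP control policy `γ^N_optm`. -/
def γOptm {α : Type*} (K L : Set (List α)) (Suc : Set α) (N : ℕ) : List α → Set α :=
  policy (fOptm K L Suc N) L Suc


theorem prCl_of_prefix {α : Type*} {M : Set (List α)} {s t : List α}
    (h : s <+: t) (ht : t ∈ prCl M) : s ∈ prCl M := by
  obtain ⟨m, hm, htm⟩ := ht
  exact ⟨m, hm, h.trans htm⟩

theorem mem_prCl_self {α : Type*} {M : Set (List α)} {t : List α} (ht : t ∈ M) :
    t ∈ prCl M := ⟨t, ht, List.prefix_rfl⟩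

theorem supC_subset {α : Type*} (K L : Set (List α)) (Suc : Set α) :
    supC K L Suc ⊆ K := by
  rintro x ⟨M, ⟨h1, _⟩, hx⟩
  exact h1 hx

theorem subset_supC {α : Type*} {M K L : Set (List α)} {Suc : Set α}
    (h1 : M ⊆ K) (h2 : ctrb M L Suc) : M ⊆ supC K L Suc :=
  fun x hx => ⟨M, ⟨h1, h2⟩, hx⟩

theorem ctrb_supC {α : Type*} (K L : Set (List α)) (Suc : Set α) :
    ctrb (supC K L Suc) L Suc := by
  intro s hs σ hσ hL
  obtain ⟨t, ⟨M, hM, htM⟩, hst⟩ := hs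
  obtain ⟨m, hm, hpre⟩ := hM.2 s ⟨t, htM, hst⟩ σ hσ hL
  exact ⟨m, ⟨M, hM, hm⟩, hpre⟩

theorem prefix_append_cases {α : Type*} {u s m : List α} (h : u <+: s ++ m) :
    u <+: s ∨ ∃ t, u = s ++ t ∧ t <+: m := by
  rcases le_or_gt u.length s.length with hle | hlt
  · exact Or.inl (List.prefix_of_prefix_length_le h (List.prefix_append s m) hle)
  · have hsu : s <+: u :=
      List.prefix_of_prefix_length_le (List.prefix_append s m) h hlt.le
    obtain ⟨t, rfl⟩ := hsu
    exact Or.inr ⟨t, rfl, (List.prefix_append_right_inj s).mp h⟩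

/-- `K↑ ≠ ∅ ⟺ L(G, γ^N_cons) ⊆ pr(K↑)`, for every `N ≥ 1`. -/
theorem cons_language_bound_iff {α : Type*} [Fintype α]
    (Sc Suc : Set α) (hpart : Sc ∪ Suc = Set.univ) (hdisj : Disjoint Sc Suc)
    (LG Lm K : Set (List α)) (hLG : LG = prCl Lm)
    (hKm : K ⊆ Lm) (hKcl : K = prCl K ∩ Lm)
    (N : ℕ) (hN : 1 ≤ N) :
    (supC K LG Suc).Nonempty ↔
      loopLang LG (γCons K LG Suc N) ⊆ prCl (supC K LG Suc) := by
  constructor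
  · intro hne s hs
    induction hs with
    | nil =>
      obtain ⟨w, hw⟩ := hne
      exact ⟨w, hw, List.nil_prefix⟩
    | @snoc s σ hloop hLGmem hγ ih =>
      rcases hγ with h | h
      · -- controllable event enabled by the conservative decision
        obtain ⟨m, hm, hpre⟩ := h
        obtain ⟨M, ⟨hMsub, hMc⟩, hmM⟩ := hm
        -- build the controllable sublanguage ((s ++ ·) '' M) ∪ supC K LG Suc
        set S : Set (List α) := supC K LG Suc with hS
        set M' : Set (List α) := ((s ++ ·) '' M) ∪ S with hM'
        have hM'K : M' ⊆ K := by
          rintro x (⟨t, htM, rfl⟩ | hxS)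
          · exact (hMsub htM).1
          · exact supC_subset K LG Suc hxS
        have hprM' : ∀ u ∈ prCl M', (∃ t ∈ prCl M, u = s ++ t) ∨ u ∈ prCl S := by
          rintro u ⟨x, hx | hxS, hux⟩
          · obtain ⟨t, htM, rfl⟩ := hx
            rcases prefix_append_cases hux with hus | ⟨t', rfl, ht'⟩
            · exact Or.inr (prCl_of_prefix hus ih)
            · exact Or.inl ⟨t', ⟨t, htM, ht'⟩, rfl⟩
          · exact Or.inr ⟨x, hxS, hux⟩
        have hM'c : ctrb M' LG Suc := by
          intro u hu σ' hσ' huLG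
          rcases hprM' u hu with ⟨t, htM, rfl⟩ | huS
          · obtain ⟨m0, hm0M, htm0⟩ := htM
            have htlen : t.length ≤ N - 1 :=
              le_trans (List.IsPrefix.length_le htm0) (hMsub hm0M).2
            have hin : t ++ [σ'] ∈ truncL (postL LG s) N := by
              constructor
              · show s ++ (t ++ [σ']) ∈ LG
                rwa [← List.append_assoc]
              · simp only [List.length_append, List.length_singleton]
                omega
            obtain ⟨m1, hm1M, hpre1⟩ := hMc t ⟨m0, hm0M, htm0⟩ σ' hσ' hin
            refine ⟨s ++ m1, Or.inl ⟨m1, hm1M, rfl⟩, ?_⟩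
            rw [List.append_assoc]
            exact (List.prefix_append_right_inj s).mpr hpre1
          · obtain ⟨w, hwS, hpw⟩ := ctrb_supC K LG Suc u huS σ' hσ' huLG
            exact ⟨w, Or.inr hwS, hpw⟩
        have hM'S : M' ⊆ S := subset_supC hM'K hM'c
        refine ⟨s ++ m, hM'S (Or.inl ⟨m, hmM, rfl⟩), ?_⟩
        exact (List.prefix_append_right_inj s).mpr hpre
      · -- uncontrollable event
        exact ctrb_supC K LG Suc s ih σ h.1 h.2
  · intro h
    obtain ⟨t, ht, _⟩ := h (InLoop.nil)
    exact ⟨t, ht⟩
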